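/- arXiv:0707.2920 — 4 statements merged into one kernel-verified Lean document; each statement's English description precedes it below -/
import Mathlib

section
/- The family (z_1, ..., z_{2q}, 1) is linearly independent over the rationals, where z_i = \sum_{k\geq 1} p_i^{-N^{2k}} for 1 \leq i \leq q and z_{i+q} = \sum_{k\geq 1} p_i^{-N^{2k+1}} for 1 \leq i \leq q. -/
/-!
Regroup `∑ i, (a i * z_i + b i * z_{i+q})` as a single series `∑ j, F j`, where `F j` collects
the exponent `N ^ (j + 2)` (coefficients `a` for even `j`, `b` for odd `j`). With
`P = ∏ i, p i`, multiplying by `P ^ N ^ (m + 1)` turns the first `m` terms into integers, while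
the tail from `m` on is `O((P / p_1 ^ N) ^ N ^ (m + 1))`. The hypothesis on `N` gives
`P ≤ p_q ^ q < p_1 ^ N`, so these integers tend to `0`: the tails eventually vanish, hence so
does `F j`. As the `p i` are distinct, `∑ i, a i * p_i ^ (-E) = 0` for arbitrarily large `E`
forces `a = 0` (the term with the least `p i` dominates); likewise `b = 0`, and then `c = 0`.
-/

open Filter Topology

lemma inv_pow_le_inv_pow_mul_inv_pow {x : ℝ} (hx : 1 ≤ x) {e : ℕ → ℕ} (he : StrictMono e)
    (j : ℕ) : (x ^ e j)⁻¹ ≤ (x ^ e 0)⁻¹ * x⁻¹ ^ j := by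
  have hx₀ : 0 < x := by linarith
  rw [inv_pow, ← mul_inv, ← pow_add, inv_le_inv₀ (by positivity) (by positivity)]
  exact pow_le_pow_right₀ hx (by simpa [add_comm] using he.add_le_nat j 0)

lemma summable_inv_pow_of_strictMono {x : ℝ} (hx : 1 < x) {e : ℕ → ℕ} (he : StrictMono e) :
    Summable fun j => (x ^ e j)⁻¹ :=
  .of_nonneg_of_le (fun j => by positivity) (inv_pow_le_inv_pow_mul_inv_pow hx.le he)
    ((summable_geometric_of_lt_one (by positivity) (inv_lt_one_of_one_lt₀ hx)).mul_left _)

lemma tsum_inv_pow_le_of_strictMono {x : ℝ} (hx : 2 ≤ x) {e : ℕ → ℕ} (he : StrictMono e) :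
    ∑' j, (x ^ e j)⁻¹ ≤ 2 * (x ^ e 0)⁻¹ := by
  have hx₁ : x⁻¹ < 1 := inv_lt_one_of_one_lt₀ (by linarith)
  have hx₂ : x⁻¹ ≤ 2⁻¹ := inv_anti₀ (by norm_num) hx
  calc ∑' j, (x ^ e j)⁻¹ ≤ ∑' j, (x ^ e 0)⁻¹ * x⁻¹ ^ j :=
        Summable.tsum_le_tsum (inv_pow_le_inv_pow_mul_inv_pow (by linarith) he)
          (summable_inv_pow_of_strictMono (by linarith) he)
          ((summable_geometric_of_lt_one (by positivity) hx₁).mul_left _)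
    _ = (x ^ e 0)⁻¹ * (1 - x⁻¹)⁻¹ := by
        rw [tsum_mul_left, tsum_geometric_of_lt_one (by positivity) hx₁]
    _ ≤ (x ^ e 0)⁻¹ * 2 := by
        gcongr
        rw [inv_le_comm₀ (by linarith) two_pos]
        linarith
    _ = 2 * (x ^ e 0)⁻¹ := mul_comm _ _

/-- After multiplying by `p i₀ ^ n` for the least `p i₀` carrying a nonzero coefficient, every
other term tends to zero, so `a i₀` would be a limit of zeros. -/
lemma eq_zero_of_eventually_sum_mul_inv_pow_eq_zero {ι : Type*} [Fintype ι] {p : ι → ℝ}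
    (hp : ∀ i, 0 < p i) (hinj : Function.Injective p) {a : ι → ℝ} {e : ℕ → ℕ}
    (he : Tendsto e atTop atTop) (h : ∀ᶠ k in atTop, ∑ i, a i * (p i ^ e k)⁻¹ = 0) :
    a = 0 := by
  classical
  by_contra ha
  obtain ⟨i₀, hi₀, hmin⟩ := (Finset.univ.filter fun i => a i ≠ 0).exists_min_image p
    (by simpa [Finset.filter_nonempty_iff, funext_iff] using ha)
  simp only [Finset.mem_filter, Finset.mem_univ, true_and] at hi₀ hmin
  have hterm (i : ι) : Tendsto (fun n : ℕ => a i * (p i₀ / p i) ^ n) atTop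
      (𝓝 (if i = i₀ then a i₀ else 0)) := by
    split_ifs with hi
    · simp [hi, div_self (hp i₀).ne']
    · by_cases hai : a i = 0
      · simp [hai]
      · have hlt : p i₀ < p i := (hmin i hai).lt_of_ne (hinj.ne (Ne.symm hi))
        simpa using ((tendsto_pow_atTop_nhds_zero_of_lt_one (div_nonneg (hp i₀).le (hp i).le)
          ((div_lt_one (hp i)).2 hlt)).const_mul (a i))
  have hlim := (tendsto_finsetSum Finset.univ fun i _ => hterm i).comp he
  simp only [Finset.sum_ite_eq', Finset.mem_univ, if_true] at hlim
  refine hi₀ (tendsto_nhds_unique hlim (tendsto_const_nhds.congr' ?_))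
  filter_upwards [h] with k hk
  have hscale :
      ∑ i, a i * (p i₀ / p i) ^ e k = p i₀ ^ e k * ∑ i, a i * (p i ^ e k)⁻¹ := by
    rw [Finset.mul_sum]
    exact Finset.sum_congr rfl fun i _ => by rw [div_pow, div_eq_mul_inv]; ring
  simp [hscale, hk]

/-- `D m` times the `m`-th tail is an integer, so once it is small the tail vanishes. -/
lemma eventually_eq_zero_of_hasSum_int {f : ℕ → ℝ} {c : ℤ} (hf : HasSum f c)
    (D : ℕ → ℕ) (hD : ∀ m, D m ≠ 0)
    (hint : ∀ m, ∀ j < m, ∃ z : ℤ, (D m : ℝ) * f j = z)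
    (htail : Tendsto (fun m => (D m : ℝ) * ∑' j, f (j + m)) atTop (𝓝 0)) :
    ∀ᶠ m in atTop, f m = 0 := by
  choose! z hz using hint
  have htail_int (m : ℕ) : ∃ n : ℤ, (D m : ℝ) * ∑' j, f (j + m) = n := by
    refine ⟨D m * c - ∑ j ∈ Finset.range m, z m j, ?_⟩
    push_cast
    rw [← hf.tsum_eq, ← hf.summable.sum_add_tsum_nat_add m, mul_add, Finset.mul_sum,
      Finset.sum_congr rfl fun j hj => hz m j (Finset.mem_range.mp hj)]
    ring
  have hvanish : ∀ᶠ m in atTop, ∑' j, f (j + m) = 0 := by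
    filter_upwards [htail.abs.eventually (gt_mem_nhds (by norm_num : |(0 : ℝ)| < 1))] with m hm
    obtain ⟨n, hn⟩ := htail_int m
    rw [hn, ← Int.cast_abs, ← Int.cast_one, Int.cast_lt, Int.abs_lt_one_iff] at hm
    rw [hm, Int.cast_zero, mul_eq_zero] at hn
    exact hn.resolve_left (Nat.cast_ne_zero.mpr (hD m))
  filter_upwards [hvanish, (tendsto_add_atTop_nat 1).eventually hvanish] with m hm hm'
  have hsplit := ((summable_nat_add_iff m).mpr hf.summable).tsum_eq_zero_add
  simp only [zero_add, add_assoc, add_comm 1 m] at hsplit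
  linarith

lemma pow_lt_pow_of_mul_log_div_log_lt {x y k n : ℕ} (hx : 1 < x) (hy : 0 < y)
    (h : (k : ℝ) * Real.log y / Real.log x < n) : y ^ k < x ^ n := by
  have hlog : 0 < Real.log x := Real.log_pos (by exact_mod_cast hx)
  rw [div_lt_iff₀ hlog] at h
  have : Real.log ((y : ℝ) ^ k) < Real.log ((x : ℝ) ^ n) := by
    rwa [Real.log_pow, Real.log_pow]
  exact_mod_cast (Real.log_lt_log_iff (by positivity) (by positivity)).mp this

section MergedSeries

variable {ι : Type*} [Fintype ι] (p : ι → ℕ) (N : ℕ) (a b : ι → ℤ)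

/-- Term `j` of `∑ i, (a i * z_i + b i * z_{i+q})` regrouped by the exponent `N ^ (j + 2)`:
the `z_i` supply the even `j`, the `z_{i+q}` the odd ones. -/
noncomputable def mergedTerm (j : ℕ) : ℝ :=
  ∑ i, ((if Even j then a i else b i : ℤ) : ℝ) * ((p i : ℝ) ^ N ^ (j + 2))⁻¹

lemma mergedTerm_two_mul (k : ℕ) :
    mergedTerm p N a b (2 * k) = ∑ i, (a i : ℝ) * ((p i : ℝ) ^ N ^ (2 * (k + 1)))⁻¹ := by
  simp [mergedTerm, mul_add]

lemma mergedTerm_two_mul_add_one (k : ℕ) :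
    mergedTerm p N a b (2 * k + 1) =
      ∑ i, (b i : ℝ) * ((p i : ℝ) ^ N ^ (2 * (k + 1) + 1))⁻¹ := by
  simp [mergedTerm, mul_add, add_assoc]

lemma hasSum_mergedTerm (hp : ∀ i, 1 < p i) (hN : 2 ≤ N) :
    HasSum (mergedTerm p N a b)
      (∑ i, ((a i : ℝ) * ∑' k, ((p i : ℝ) ^ N ^ (2 * (k + 1)))⁻¹ +
        (b i : ℝ) * ∑' k, ((p i : ℝ) ^ N ^ (2 * (k + 1) + 1))⁻¹)) := by
  have hpow : StrictMono (N ^ ·) := pow_right_strictMono₀ (by omega)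
  have hsummable (i : ι) {e : ℕ → ℕ} (he : StrictMono e) :
      Summable fun k => ((p i : ℝ) ^ N ^ e k)⁻¹ :=
    summable_inv_pow_of_strictMono (by exact_mod_cast hp i) (hpow.comp he)
  rw [Finset.sum_add_distrib]
  refine HasSum.even_add_odd ?_ ?_
  · simp only [mergedTerm_two_mul]
    exact hasSum_sum fun i _ =>
      ((hsummable i (strictMono_nat_of_lt_succ fun k => by omega)).hasSum.mul_left _)
  · simp only [mergedTerm_two_mul_add_one]
    exact hasSum_sum fun i _ =>
      ((hsummable i (strictMono_nat_of_lt_succ fun k => by omega)).hasSum.mul_left _)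

lemma exists_int_eq_prod_pow_mul_mergedTerm (hp : ∀ i, 0 < p i) {j m : ℕ} (hjm : j < m) :
    ∃ z : ℤ, (((∏ i, p i) ^ N ^ (m + 1) : ℕ) : ℝ) * mergedTerm p N a b j = z := by
  have hexp : N ^ (j + 2) ≤ N ^ (m + 1) := by
    rcases N.eq_zero_or_pos with rfl | hN
    · simp
    · exact Nat.pow_le_pow_right hN (by omega)
  have hdvd (i : ι) : p i ^ N ^ (j + 2) ∣ (∏ i, p i) ^ N ^ (m + 1) :=
    (pow_dvd_pow_of_dvd (Finset.dvd_prod_of_mem p (Finset.mem_univ i)) _).trans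
      (pow_dvd_pow _ hexp)
  refine ⟨∑ i, (if Even j then a i else b i) *
    (((∏ i, p i) ^ N ^ (m + 1) / p i ^ N ^ (j + 2) : ℕ) : ℤ), ?_⟩
  rw [mergedTerm, Finset.mul_sum, Int.cast_sum]
  refine Finset.sum_congr rfl fun i _ => ?_
  rw [Int.cast_mul, Int.cast_natCast, Nat.cast_div (hdvd i) (by have := hp i; positivity)]
  push_cast
  ring

lemma abs_mergedTerm_le {x : ℕ} (hx : 0 < x) (hxp : ∀ i, x ≤ p i) (j : ℕ) :
    |mergedTerm p N a b j| ≤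
      (∑ i, (|(a i : ℝ)| + |(b i : ℝ)|)) * ((x : ℝ) ^ N ^ (j + 2))⁻¹ := by
  rw [mergedTerm, Finset.sum_mul]
  refine (Finset.abs_sum_le_sum_abs _ _).trans (Finset.sum_le_sum fun i _ => ?_)
  rw [abs_mul, abs_inv, abs_pow, Nat.abs_cast]
  refine mul_le_mul ?_ (inv_anti₀ (by positivity) (by gcongr; exact hxp i)) (by positivity)
    (by positivity)
  split_ifs <;> simp

lemma abs_tsum_mergedTerm_nat_add_le {x : ℕ} (hx : 2 ≤ x) (hxp : ∀ i, x ≤ p i)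
    (hN : 2 ≤ N) (m : ℕ) : |∑' j, mergedTerm p N a b (j + m)| ≤
      2 * (∑ i, (|(a i : ℝ)| + |(b i : ℝ)|)) * ((x : ℝ) ^ N ^ (m + 2))⁻¹ := by
  set C := ∑ i, (|(a i : ℝ)| + |(b i : ℝ)|)
  have he : StrictMono fun j => N ^ (j + m + 2) :=
    (pow_right_strictMono₀ (by omega)).comp (strictMono_nat_of_lt_succ fun j => by omega)
  have hx' : (2 : ℝ) ≤ x := by exact_mod_cast hx
  have hC : 0 ≤ C := Finset.sum_nonneg fun i _ => by positivity
  rw [← Real.norm_eq_abs]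
  calc ‖∑' j, mergedTerm p N a b (j + m)‖
        ≤ ∑' j, C * ((x : ℝ) ^ N ^ (j + m + 2))⁻¹ :=
        tsum_of_norm_bounded
          ((summable_inv_pow_of_strictMono (by linarith) he).mul_left C).hasSum
          fun j => abs_mergedTerm_le p N a b (by omega) hxp (j + m)
    _ = C * ∑' j, ((x : ℝ) ^ N ^ (j + m + 2))⁻¹ := tsum_mul_left
    _ ≤ C * (2 * ((x : ℝ) ^ N ^ (m + 2))⁻¹) :=
        mul_le_mul_of_nonneg_left (by simpa using tsum_inv_pow_le_of_strictMono hx' he) hC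
    _ = 2 * C * ((x : ℝ) ^ N ^ (m + 2))⁻¹ := by ring

lemma tendsto_prod_pow_mul_tsum_mergedTerm {x : ℕ} (hx : 2 ≤ x) (hxp : ∀ i, x ≤ p i)
    (hN : 2 ≤ N) (hP : ∏ i, p i < x ^ N) :
    Tendsto
      (fun m => (((∏ i, p i) ^ N ^ (m + 1) : ℕ) : ℝ) * ∑' j, mergedTerm p N a b (j + m))
      atTop (𝓝 0) := by
  set C := ∑ i, (|(a i : ℝ)| + |(b i : ℝ)|)
  set r : ℝ := (∏ i, p i : ℕ) / ((x : ℝ) ^ N)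
  have hr : r < 1 := by rw [div_lt_one (by positivity)]; exact_mod_cast hP
  have hexp : StrictMono fun m => N ^ (m + 1) :=
    (pow_right_strictMono₀ (by omega)).comp (strictMono_nat_of_lt_succ fun m => by omega)
  have hlim : Tendsto (fun m => 2 * C * r ^ N ^ (m + 1)) atTop (𝓝 0) := by
    simpa using ((tendsto_pow_atTop_nhds_zero_of_lt_one (by positivity) hr).comp
      hexp.tendsto_atTop).const_mul (2 * C)
  refine squeeze_zero_norm (fun m => ?_) hlim
  rw [Real.norm_eq_abs, abs_mul, Nat.abs_cast]
  calc _ ≤ (((∏ i, p i) ^ N ^ (m + 1) : ℕ) : ℝ) *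
        (2 * C * ((x : ℝ) ^ N ^ (m + 2))⁻¹) := by
        gcongr
        exact abs_tsum_mergedTerm_nat_add_le p N a b hx hxp hN m
    _ = 2 * C * r ^ N ^ (m + 1) := by
        rw [div_pow, ← pow_mul, ← pow_succ']
        push_cast
        ring

lemma eq_zero_of_eventually_mergedTerm_eq_zero (hp : ∀ i, 0 < p i)
    (hinj : Function.Injective p) (hN : 2 ≤ N) (h : ∀ᶠ j in atTop, mergedTerm p N a b j = 0) :
    a = 0 ∧ b = 0 := by
  have hpow : StrictMono (N ^ ·) := pow_right_strictMono₀ (by omega)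
  have hp' (i : ι) : (0 : ℝ) < p i := by exact_mod_cast hp i
  have hinj' : Function.Injective fun i => (p i : ℝ) := Nat.cast_injective.comp hinj
  have hshift {e : ℕ → ℕ} (he : StrictMono e) :
      ∀ᶠ k in atTop, mergedTerm p N a b (e k) = 0 :=
    he.tendsto_atTop.eventually h
  have heven : StrictMono fun k => 2 * k := strictMono_mul_left_of_pos two_pos
  have hodd : StrictMono fun k => 2 * k + 1 := strictMono_nat_of_lt_succ fun k => by omega
  have ha := eq_zero_of_eventually_sum_mul_inv_pow_eq_zero hp' hinj'
    (e := fun k => N ^ (2 * (k + 1))) (hpow.comp (heven.add_const 2)).tendsto_atTop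
    ((hshift heven).mono fun k hk => by rwa [mergedTerm_two_mul] at hk)
  have hb := eq_zero_of_eventually_sum_mul_inv_pow_eq_zero hp' hinj'
    (e := fun k => N ^ (2 * (k + 1) + 1)) (hpow.comp (hodd.add_const 2)).tendsto_atTop
    ((hshift hodd).mono fun k hk => by rwa [mergedTerm_two_mul_add_one] at hk)
  exact ⟨funext fun i => by simpa using congrFun ha i,
    funext fun i => by simpa using congrFun hb i⟩

end MergedSeries

/-- With `q ≥ 2`, integers `1 < p 0 < ... < p (q-1)`, and an integer
`N > q * log p_q / log p_1`, the family `(z 1, ..., z (2q), 1)` is linearly independent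
over `ℚ`, where `zA i = ∑_{k ≥ 1} (p i)^{-N^{2k}}` and `zB i = ∑_{k ≥ 1} (p i)^{-N^{2k+1}}`. -/
theorem stmt0 (q : ℕ) (hq : 2 ≤ q) (p : Fin q → ℕ) (hp1 : ∀ i, 1 < p i)
    (hmono : StrictMono p) (N : ℕ)
    (hN : (q : ℝ) * Real.log (p ⟨q - 1, by omega⟩) / Real.log (p ⟨0, by omega⟩) < (N : ℝ))
    (zA zB : Fin q → ℝ)
    (hzA : ∀ i, zA i = ∑' k : ℕ, ((p i : ℝ) ^ (N ^ (2 * (k + 1))))⁻¹)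
    (hzB : ∀ i, zB i = ∑' k : ℕ, ((p i : ℝ) ^ (N ^ (2 * (k + 1) + 1)))⁻¹)
    (a b : Fin q → ℤ) (c : ℤ)
    (h : ∑ i, ((a i : ℝ) * zA i + (b i : ℝ) * zB i) = (c : ℝ)) :
    a = 0 ∧ b = 0 ∧ c = 0 := by
  have hpos : ∀ i, 0 < p i := fun i => Nat.zero_lt_of_lt (hp1 i)
  set p₀ := p ⟨0, by omega⟩
  set pₗ := p ⟨q - 1, by omega⟩
  have hp₀ : ∀ i, p₀ ≤ p i := fun i =>
    hmono.monotone (Fin.le_iff_val_le_val.mpr (Nat.zero_le _))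
  have hpₗ : ∀ i, p i ≤ pₗ := fun i =>
    hmono.monotone (Fin.le_iff_val_le_val.mpr (Nat.le_sub_one_of_lt i.isLt))
  have hP : ∏ i, p i < p₀ ^ N := by
    refine (Finset.prod_le_pow_card _ _ _ fun i _ => hpₗ i).trans_lt ?_
    simpa using pow_lt_pow_of_mul_log_div_log_lt (hp1 _) (hpos _) hN
  have hqN : q < N := (Nat.pow_lt_pow_iff_right (hp1 _)).mp <| by
    simpa using (Finset.pow_card_le_prod _ _ _ fun i _ => hp₀ i).trans_lt hP
  have hN2 : 2 ≤ N := by omega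
  have hsum : HasSum (mergedTerm p N a b) c := by
    simpa only [← hzA, ← hzB, h] using hasSum_mergedTerm p N a b hp1 hN2
  have hvanish := eventually_eq_zero_of_hasSum_int hsum _
    (fun m => pow_ne_zero _ (Finset.prod_ne_zero_iff.mpr fun i _ => (hpos i).ne'))
    (fun m j hjm => exists_int_eq_prod_pow_mul_mergedTerm p N a b hpos hjm)
    (tendsto_prod_pow_mul_tsum_mergedTerm p N a b (hp1 _) hp₀ hN2 hP)
  obtain ⟨rfl, rfl⟩ := eq_zero_of_eventually_mergedTerm_eq_zero p N a b
    hpos hmono.injective hN2 hvanish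
  have hzero : mergedTerm p N 0 0 = 0 := funext fun j => by simp [mergedTerm]
  rw [hzero] at hsum
  exact ⟨rfl, rfl, by exact_mod_cast hsum.unique hasSum_zero⟩
end

section
/- Let L be a connected Lie group (or more generally a connected topological group), \Lambda \subset L a discrete subgroup, M a closed connected subgroup of L, and N a subgroup of L which is a countable union of closed sets. If M \subset N\Lambda, then M \subset N. -/
/-!
Cover `M` by the countably many closed sets `{m ∈ M | m λ⁻¹ ∈ C n}` (`λ ∈ Λ`); by Baire one of
them has interior, so `N ∩ M` contains a neighbourhood of a point up to translation and is an open
subgroup of `M`. An open subgroup is closed, hence all of the connected group `M`.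
-/

open Pointwise Filter Topology

namespace Subgroup

variable {G : Type*} [TopologicalSpace G] [Group G] [IsTopologicalGroup G]

theorem isOpen_of_mul_inv_mem_of_interior_nonempty (H : Subgroup G) {s : Set G}
    (hs : (interior s).Nonempty) (hH : ∀ x ∈ s, ∀ y ∈ s, x * y⁻¹ ∈ H) :
    IsOpen (H : Set G) := by
  obtain ⟨x, hx⟩ := hs
  have hs_nhds : s ∈ 𝓝 x := mem_interior_iff_mem_nhds.mp hx
  have : (H : Set G) ∈ 𝓝 (x * x⁻¹) := by
    rw [← map_mul_right_nhds]
    exact Filter.mem_map.mpr <| mem_of_superset hs_nhds fun y hy => hH y hy x (interior_subset hx)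
  exact H.isOpen_of_mem_nhds this

theorem eq_top_of_isOpen [ConnectedSpace G] (H : Subgroup G) (hH : IsOpen (H : Set G)) :
    H = ⊤ :=
  SetLike.coe_injective <|
    IsClopen.eq_univ ⟨H.isClosed_of_isOpen hH, hH⟩ ⟨1, H.one_mem⟩

theorem isOpen_comap_of_subset_mul_countable [BaireSpace G]
    {K : Type*} [TopologicalSpace K] [Group K] [IsTopologicalGroup K]
    (φ : G →* K) (hφ : Continuous φ) (N : Subgroup K) {C : ℕ → Set K}
    (hC : ∀ n, IsClosed (C n)) (hN : (N : Set K) = ⋃ n, C n) {S : Set K} (hS : S.Countable)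
    (hφN : Set.range φ ⊆ (N : Set K) * S) :
    IsOpen (N.comap φ : Set G) := by
  have : Countable S := hS.to_subtype
  let piece : ℕ × S → Set G := fun p => {g | φ g * (p.2 : K)⁻¹ ∈ C p.1}
  have piece_closed : ∀ p, IsClosed (piece p) := fun p =>
    (hC p.1).preimage (hφ.mul continuous_const)
  have piece_cover : ⋃ p, piece p = Set.univ := by
    refine Set.eq_univ_of_forall fun g => ?_
    obtain ⟨n, hn, s, hs, hns⟩ := hφN ⟨g, rfl⟩
    obtain ⟨k, hk⟩ := Set.mem_iUnion.mp (hN ▸ hn)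
    exact Set.mem_iUnion.mpr ⟨(k, ⟨s, hs⟩), by simpa [piece, ← hns] using hk⟩
  obtain ⟨p, hp⟩ := nonempty_interior_of_iUnion_of_closed piece_closed piece_cover
  refine (N.comap φ).isOpen_of_mul_inv_mem_of_interior_nonempty hp fun x hx y hy => ?_
  have hC_sub : C p.1 ⊆ N := hN ▸ Set.subset_iUnion C p.1
  have : φ (x * y⁻¹) = (φ x * (p.2 : K)⁻¹) * (φ y * (p.2 : K)⁻¹)⁻¹ := by
    rw [map_mul, map_inv]; group
  rw [mem_comap, this]
  exact N.mul_mem (hC_sub hx) (N.inv_mem (hC_sub hy))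

end Subgroup

theorem stmt6_general {L : Type*} [TopologicalSpace L] [Group L] [IsTopologicalGroup L]
    [LocallyCompactSpace L]
    (Λ M N : Subgroup L)
    (hΛcount : (Λ : Set L).Countable)
    (hMclosed : IsClosed (M : Set L)) (hMconn : IsConnected (M : Set L))
    (hN : ∃ C : ℕ → Set L, (∀ n, IsClosed (C n)) ∧ (N : Set L) = ⋃ n, C n)
    (h : (M : Set L) ⊆ (N : Set L) * (Λ : Set L)) :
    (M : Set L) ⊆ (N : Set L) := by
  obtain ⟨C, hC, hNC⟩ := hN
  have : ConnectedSpace M := isConnected_iff_connectedSpace.mp hMconn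
  have : LocallyCompactSpace M := hMclosed.locallyCompactSpace
  have hopen : IsOpen (N.subgroupOf M : Set M) :=
    Subgroup.isOpen_comap_of_subset_mul_countable M.subtype continuous_subtype_val N hC hNC
      hΛcount (by rwa [Subgroup.coe_subtype, Subtype.range_coe])
  intro m hm
  have : (⟨m, hm⟩ : M) ∈ N.subgroupOf M :=
    (N.subgroupOf M).eq_top_of_isOpen hopen ▸ Subgroup.mem_top _
  exact Subgroup.mem_subgroupOf.mp this

/-- Let `L` be a connected topological group satisfying the Baire category
theorem on its closed subsets (e.g. a locally compact Lie group), `Λ` a countable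
discrete subgroup, `M` a closed connected subgroup, and `N` a subgroup which is a
countable union of closed sets. If `M ⊆ N Λ` then `M ⊆ N`. -/
theorem stmt6 {L : Type*} [TopologicalSpace L] [Group L] [IsTopologicalGroup L]
    [LocallyCompactSpace L] [ConnectedSpace L]
    (Λ M N : Subgroup L)
    (hΛcount : (Λ : Set L).Countable) (hΛdisc : DiscreteTopology Λ)
    (hMclosed : IsClosed (M : Set L)) (hMconn : IsConnected (M : Set L))
    (hN : ∃ C : ℕ → Set L, (∀ n, IsClosed (C n)) ∧ (N : Set L) = ⋃ n, C n)
    (h : (M : Set L) ⊆ (N : Set L) * (Λ : Set L)) :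
    (M : Set L) ⊆ (N : Set L) :=
  stmt6_general Λ M N hΛcount hMclosed hMconn hN h
end

section
/- Let a_1,...,a_q, b_1,...,b_q, c be integers and suppose \sum_{i=1}^q (a_i z_i + b_i z_{i+q}) = c. Then for every integer k_0 \geq 1, the quantity (\prod_{i=1}^q p_i)^{N^{2k_0+1}} \cdot (\sum_{i=1}^q \sum_{k=1}^{k_0} (a_i p_i^{-N^{2k}} + b_i p_i^{-N^{2k+1}}) - c) is an integer, and its absolute value is at most 4q \max_i(|a_i|,|b_i|) \exp(N^{2k_0+1}(q \log p_q - N \log p_1)). -/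
/-!
Split each lacunary series `z_i` at `k₀`. Multiplying the head by `P = (∏ p_i)^{N^{2k₀+1}}`
clears all denominators, so `P · (head - c)` is an integer; by the linear relation it equals
`-P` times the combined tails. The exponents of a tail increase strictly, so its terms decay
at least like `2^{-k}` and the tail is at most twice its first term, hence at most
`2 p_1^{-N^{2k₀+2}}`; with `P ≤ p_q^{q N^{2k₀+1}}` this gives the exponential bound.
-/

open Finset Real

section Lacunary

variable {x : ℝ} {g : ℕ → ℕ}

lemma inv_pow_le_inv_pow_mul_half_pow (hx : 2 ≤ x) (hg : StrictMono g) (k : ℕ) :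
    (x ^ g k)⁻¹ ≤ (x ^ g 0)⁻¹ * (1 / 2) ^ k := by
  have hx_inv : x⁻¹ ≤ 1 / 2 := by
    rw [inv_le_comm₀ (by linarith) (by norm_num)]
    linarith
  have hx_inv_nonneg : 0 ≤ x⁻¹ := inv_nonneg.2 (by linarith)
  calc (x ^ g k)⁻¹ = x⁻¹ ^ g k := (inv_pow x _).symm
    _ ≤ x⁻¹ ^ (g 0 + k) :=
      pow_le_pow_of_le_one hx_inv_nonneg (by linarith)
        (by simpa [add_comm] using hg.add_le_nat k 0)
    _ = (x ^ g 0)⁻¹ * x⁻¹ ^ k := by rw [pow_add, inv_pow]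
    _ ≤ (x ^ g 0)⁻¹ * (1 / 2) ^ k := by gcongr

lemma summable_inv_pow (hx : 2 ≤ x) (hg : StrictMono g) : Summable fun k => (x ^ g k)⁻¹ :=
  Summable.of_nonneg_of_le (fun _ => inv_nonneg.2 (pow_nonneg (by linarith) _))
    (inv_pow_le_inv_pow_mul_half_pow hx hg) (summable_geometric_two.mul_left _)

lemma tsum_inv_pow_le (hx : 2 ≤ x) (hg : StrictMono g) :
    ∑' k, (x ^ g k)⁻¹ ≤ 2 * (x ^ g 0)⁻¹ :=
  calc ∑' k, (x ^ g k)⁻¹ ≤ ∑' k, (x ^ g 0)⁻¹ * (1 / 2) ^ k :=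
        (summable_inv_pow hx hg).tsum_le_tsum (inv_pow_le_inv_pow_mul_half_pow hx hg)
          (summable_geometric_two.mul_left _)
    _ = 2 * (x ^ g 0)⁻¹ := by rw [tsum_mul_left, tsum_geometric_two, mul_comm]

lemma exists_tsum_inv_pow_eq_sum_add (hx : 2 ≤ x) (hg : StrictMono g) (n : ℕ) :
    ∃ t, ∑' k, (x ^ g (k + 1))⁻¹ = ∑ k ∈ Icc 1 n, (x ^ g k)⁻¹ + t ∧
      0 ≤ t ∧ t ≤ 2 * (x ^ g (n + 1))⁻¹ := by
  have hshift : StrictMono fun k => g (k + n + 1) := fun _ _ h => hg (by omega)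
  refine ⟨∑' k, (x ^ g (k + n + 1))⁻¹, ?_,
    tsum_nonneg fun _ => inv_nonneg.2 (pow_nonneg (by linarith) _), ?_⟩
  · have hs : Summable fun k => (x ^ g (k + 1))⁻¹ :=
      summable_inv_pow hx fun _ _ h => hg (by omega)
    rw [← hs.sum_add_tsum_nat_add n, range_eq_Ico, sum_Ico_add' (fun k => (x ^ g k)⁻¹),
      zero_add, Ico_add_one_right_eq_Icc]
  · simpa using tsum_inv_pow_le hx hshift

end Lacunary

lemma inv_pow_le_inv_pow_of_le_of_le {x y : ℝ} {m n : ℕ} (hy : 1 ≤ y) (hyx : y ≤ x)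
    (hmn : m ≤ n) : (x ^ n)⁻¹ ≤ (y ^ m)⁻¹ :=
  inv_anti₀ (pow_pos (by linarith) _)
    ((pow_le_pow_right₀ hy hmn).trans (pow_le_pow_left₀ (by linarith) hyx n))

lemma abs_sum_mul_add_mul_le {ι : Type*} (s : Finset ι) {a b u v : ι → ℝ} {A δ : ℝ}
    (ha : ∀ i, |a i| ≤ A) (hb : ∀ i, |b i| ≤ A) (hu : ∀ i, 0 ≤ u i ∧ u i ≤ δ)
    (hv : ∀ i, 0 ≤ v i ∧ v i ≤ δ) :
    |∑ i ∈ s, (a i * u i + b i * v i)| ≤ s.card * (2 * A * δ) := by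
  have hterm : ∀ i, |a i * u i + b i * v i| ≤ 2 * A * δ := fun i =>
    calc |a i * u i + b i * v i| ≤ |a i * u i| + |b i * v i| := abs_add_le _ _
      _ = |a i| * u i + |b i| * v i := by
          rw [abs_mul, abs_mul, abs_of_nonneg (hu i).1, abs_of_nonneg (hv i).1]
      _ ≤ 2 * A * δ := by
          have hau := mul_le_mul (ha i) (hu i).2 (hu i).1 ((abs_nonneg _).trans (ha i))
          have hbv := mul_le_mul (hb i) (hv i).2 (hv i).1 ((abs_nonneg _).trans (hb i))
          linarith
  calc |∑ i ∈ s, (a i * u i + b i * v i)| ≤ ∑ i ∈ s, |a i * u i + b i * v i| :=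
        abs_sum_le_sum_abs _ _
    _ ≤ ∑ _i ∈ s, 2 * A * δ := sum_le_sum fun i _ => hterm i
    _ = s.card * (2 * A * δ) := by rw [sum_const, nsmul_eq_mul]

lemma abs_partial_sum_sub_le {ι : Type*} [Fintype ι] {p : ι → ℕ} {p₁ N : ℕ}
    (hp₁ : 1 < p₁) (hp₁_le : ∀ i, p₁ ≤ p i) (hN : 2 ≤ N) {zA zB : ι → ℝ}
    (hzA : ∀ i, zA i = ∑' k : ℕ, ((p i : ℝ) ^ (N ^ (2 * (k + 1))))⁻¹)
    (hzB : ∀ i, zB i = ∑' k : ℕ, ((p i : ℝ) ^ (N ^ (2 * (k + 1) + 1)))⁻¹)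
    {a b : ι → ℤ} {c : ℤ} (h : ∑ i, ((a i : ℝ) * zA i + (b i : ℝ) * zB i) = c)
    {A : ℝ} (ha : ∀ i, |(a i : ℝ)| ≤ A) (hb : ∀ i, |(b i : ℝ)| ≤ A) (k₀ : ℕ) :
    |(∑ i, ∑ k ∈ Icc 1 k₀, ((a i : ℝ) * ((p i : ℝ) ^ (N ^ (2 * k)))⁻¹
        + (b i : ℝ) * ((p i : ℝ) ^ (N ^ (2 * k + 1)))⁻¹)) - c|
      ≤ Fintype.card ι * (4 * A * ((p₁ : ℝ) ^ (N ^ (2 * (k₀ + 1))))⁻¹) := by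
  have hp_two : ∀ i, (2 : ℝ) ≤ p i := fun i => by exact_mod_cast hp₁.trans_le (hp₁_le i)
  have hgA : StrictMono fun k => N ^ (2 * k) :=
    (pow_right_strictMono₀ (by omega)).comp fun _ _ h => by omega
  have hgB : StrictMono fun k => N ^ (2 * k + 1) :=
    (pow_right_strictMono₀ (by omega)).comp fun _ _ h => by omega
  choose tA hzA_split htA using fun i => exists_tsum_inv_pow_eq_sum_add (hp_two i) hgA k₀
  choose tB hzB_split htB using fun i => exists_tsum_inv_pow_eq_sum_add (hp_two i) hgB k₀
  set δ : ℝ := 2 * ((p₁ : ℝ) ^ (N ^ (2 * (k₀ + 1))))⁻¹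
  have hinv_le : ∀ i {n}, N ^ (2 * (k₀ + 1)) ≤ n →
      2 * ((p i : ℝ) ^ n)⁻¹ ≤ δ := fun i _ hn =>
    mul_le_mul_of_nonneg_left (inv_pow_le_inv_pow_of_le_of_le
      (by exact_mod_cast hp₁.le) (by exact_mod_cast hp₁_le i) hn) zero_le_two
  have htA_le : ∀ i, 0 ≤ tA i ∧ tA i ≤ δ := fun i =>
    ⟨(htA i).1, (htA i).2.trans (hinv_le i le_rfl)⟩
  have htB_le : ∀ i, 0 ≤ tB i ∧ tB i ≤ δ := fun i =>
    ⟨(htB i).1, (htB i).2.trans (hinv_le i (Nat.pow_le_pow_right (by omega) (by omega)))⟩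
  have hsplit : ∀ i, (a i : ℝ) * zA i + (b i : ℝ) * zB i
      = ∑ k ∈ Icc 1 k₀, ((a i : ℝ) * ((p i : ℝ) ^ (N ^ (2 * k)))⁻¹
        + (b i : ℝ) * ((p i : ℝ) ^ (N ^ (2 * k + 1)))⁻¹)
        + ((a i : ℝ) * tA i + (b i : ℝ) * tB i) := by
    intro i
    rw [hzA i, hzA_split i, hzB i, hzB_split i, sum_add_distrib, ← mul_sum, ← mul_sum]
    ring
  rw [← h, sum_congr rfl fun i _ => hsplit i, sum_add_distrib, sub_add_cancel_left, abs_neg,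
    card_univ.symm]
  calc _ ≤ (univ : Finset ι).card * (2 * A * δ) :=
        abs_sum_mul_add_mul_le univ ha hb htA_le htB_le
    _ = _ := by ring

lemma prod_pow_mul_inv_pow_mem_range {ι : Type*} [Fintype ι] (p : ι → ℕ)
    (hp : ∀ i, p i ≠ 0) (i : ι) {m n : ℕ} (hmn : m ≤ n) :
    (∏ j, (p j : ℝ)) ^ n * ((p i : ℝ) ^ m)⁻¹ ∈ (Int.castRingHom ℝ).range := by
  obtain ⟨r, hr⟩ : p i ^ m ∣ (∏ j, p j) ^ n :=
    (pow_dvd_pow _ hmn).trans (pow_dvd_pow_of_dvd (dvd_prod_of_mem _ (mem_univ i)) n)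
  have hr' : (∏ j, (p j : ℝ)) ^ n = (p i : ℝ) ^ m * r := by exact_mod_cast hr
  refine ⟨r, ?_⟩
  rw [hr', mul_comm, ← mul_assoc, inv_mul_cancel₀ (pow_ne_zero _ (Nat.cast_ne_zero.2 (hp i))),
    one_mul, eq_intCast, Int.cast_natCast]

lemma prod_pow_mul_partial_sum_sub_mem_range {ι : Type*} [Fintype ι] (p : ι → ℕ)
    (hp : ∀ i, p i ≠ 0) {N : ℕ} (hN : 0 < N) (a b : ι → ℤ) (c : ℤ) (k₀ : ℕ) :
    (∏ i, (p i : ℝ)) ^ (N ^ (2 * k₀ + 1)) *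
      ((∑ i, ∑ k ∈ Icc 1 k₀, ((a i : ℝ) * ((p i : ℝ) ^ (N ^ (2 * k)))⁻¹
        + (b i : ℝ) * ((p i : ℝ) ^ (N ^ (2 * k + 1)))⁻¹)) - c)
      ∈ (Int.castRingHom ℝ).range := by
  rw [mul_sub, mul_sum]
  refine sub_mem (sum_mem fun i _ => ?_)
    (mul_mem (pow_mem (prod_mem fun j _ => natCast_mem _ _) _) (intCast_mem _ _))
  rw [mul_sum]
  refine sum_mem fun k hk => ?_
  rw [mem_Icc] at hk
  rw [mul_add, mul_left_comm, mul_left_comm _ (b i : ℝ)]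
  exact add_mem
    (mul_mem (intCast_mem _ _)
      (prod_pow_mul_inv_pow_mem_range p hp i (Nat.pow_le_pow_right hN (by omega))))
    (mul_mem (intCast_mem _ _)
      (prod_pow_mul_inv_pow_mem_range p hp i (Nat.pow_le_pow_right hN (by omega))))

lemma abs_intCast_le_sup_max_natAbs {ι : Type*} [Fintype ι] (a b : ι → ℤ) (i : ι) :
    |(a i : ℝ)| ≤ ((univ.sup fun j => max (a j).natAbs (b j).natAbs : ℕ) : ℝ) ∧
      |(b i : ℝ)| ≤ ((univ.sup fun j => max (a j).natAbs (b j).natAbs : ℕ) : ℝ) := by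
  have hsup := le_sup (f := fun j => max (a j).natAbs (b j).natAbs) (mem_univ i)
  simp only [← Int.cast_abs, Int.abs_eq_natAbs, Int.cast_natCast, Nat.cast_le]
  exact ⟨(le_max_left _ _).trans hsup, (le_max_right _ _).trans hsup⟩

lemma prod_pow_le_pow_card_mul {ι : Type*} [Fintype ι] (p : ι → ℕ) {M : ℕ}
    (hM : ∀ i, p i ≤ M) (e : ℕ) :
    (∏ i, (p i : ℝ)) ^ e ≤ (M : ℝ) ^ (Fintype.card ι * e) := by
  rw [pow_mul]
  gcongr
  exact_mod_cast (prod_le_pow_card univ p M fun i _ => hM i).trans_eq (by simp)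

lemma exp_mul_log_sub_mul_log {x y : ℝ} (hx : 0 < x) (hy : 0 < y) (m n : ℕ) :
    exp (m * log x - n * log y) = x ^ m * (y ^ n)⁻¹ := by
  rw [exp_sub, ← log_pow, ← log_pow, exp_log (pow_pos hx m), exp_log (pow_pos hy n),
    div_eq_mul_inv]

lemma two_le_of_mul_log_div_log_lt {q p₁ p_q N : ℕ} (hq : 1 ≤ q) (hp₁ : 1 < p₁)
    (hp₁_le : p₁ ≤ p_q) (hN : (q : ℝ) * log p_q / log p₁ < N) : 2 ≤ N := by
  have hlog₁ : 0 < log p₁ := log_pos (by exact_mod_cast hp₁)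
  have hlog_le : log p₁ ≤ log p_q := log_le_log (by positivity) (by exact_mod_cast hp₁_le)
  have : (1 : ℝ) ≤ q * log p_q / log p₁ := by
    rw [le_div_iff₀ hlog₁]
    nlinarith [(Nat.one_le_cast (α := ℝ)).2 hq]
  exact_mod_cast (this.trans_lt hN : (1 : ℝ) < N)

/-- If `∑ i (a i * z i + b i * z_{i+q}) = c`, then for every `k₀ ≥ 1` the
quantity `(∏ p i)^{N^{2k₀+1}} (∑_{i} ∑_{k=1}^{k₀} (a i p_i^{-N^{2k}} + b i p_i^{-N^{2k+1}}) - c)`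
is an integer of absolute value at most
`4 q max_i(|a i|,|b i|) exp(N^{2k₀+1}(q log p_q - N log p_1))`. -/
theorem stmt18 (q : ℕ) (hq : 1 ≤ q) (p : Fin q → ℕ) (hp1 : ∀ i, 1 < p i)
    (hmono : StrictMono p) (N : ℕ)
    (hN : (q : ℝ) * Real.log (p ⟨q - 1, by omega⟩) / Real.log (p ⟨0, by omega⟩) < (N : ℝ))
    (zA zB : Fin q → ℝ)
    (hzA : ∀ i, zA i = ∑' k : ℕ, ((p i : ℝ) ^ (N ^ (2 * (k + 1))))⁻¹)
    (hzB : ∀ i, zB i = ∑' k : ℕ, ((p i : ℝ) ^ (N ^ (2 * (k + 1) + 1)))⁻¹)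
    (a b : Fin q → ℤ) (c : ℤ)
    (h : ∑ i, ((a i : ℝ) * zA i + (b i : ℝ) * zB i) = (c : ℝ))
    (k₀ : ℕ) :
    ∃ m : ℤ,
      (∏ i, (p i : ℝ)) ^ (N ^ (2 * k₀ + 1)) *
        ((∑ i, ∑ k ∈ Finset.Icc 1 k₀,
          ((a i : ℝ) * ((p i : ℝ) ^ (N ^ (2 * k)))⁻¹
            + (b i : ℝ) * ((p i : ℝ) ^ (N ^ (2 * k + 1)))⁻¹)) - (c : ℝ)) = (m : ℝ) ∧
      |(m : ℝ)| ≤ 4 * q *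
        ((Finset.univ.sup fun i => max (a i).natAbs (b i).natAbs : ℕ) : ℝ) *
        Real.exp ((N : ℝ) ^ (2 * k₀ + 1) *
          (q * Real.log (p ⟨q - 1, by omega⟩) - N * Real.log (p ⟨0, by omega⟩))) := by
  set p₁ := p ⟨0, by omega⟩
  set p_q := p ⟨q - 1, by omega⟩
  have hp₁_le : ∀ i, p₁ ≤ p i := fun i =>
    hmono.monotone (Fin.mk_le_mk.2 (Nat.zero_le _) : ⟨0, _⟩ ≤ i)
  have hle_pq : ∀ i, p i ≤ p_q := fun i => hmono.monotone (Fin.mk_le_mk.2 (by omega))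
  have hN2 : 2 ≤ N := two_le_of_mul_log_div_log_lt hq (hp1 _) (hp₁_le _) hN
  have hp_pos : ∀ i, 0 < p i := fun i => zero_lt_one.trans (hp1 i)
  obtain ⟨m, hm⟩ := prod_pow_mul_partial_sum_sub_mem_range p (fun i => (hp_pos i).ne')
    (by omega : 0 < N) a b c k₀
  rw [eq_intCast] at hm
  refine ⟨m, hm.symm, ?_⟩
  have hexp : (N : ℝ) ^ (2 * k₀ + 1) * (q * log p_q - N * log p₁)
      = ((q * N ^ (2 * k₀ + 1) : ℕ) : ℝ) * log p_q
        - ((N ^ (2 * (k₀ + 1)) : ℕ) : ℝ) * log p₁ := by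
    push_cast
    ring
  rw [hm, abs_mul, abs_of_nonneg (by positivity), hexp,
    exp_mul_log_sub_mul_log (Nat.cast_pos.2 (hp_pos _)) (Nat.cast_pos.2 (hp_pos _))]
  have herr := abs_partial_sum_sub_le (hp1 _) hp₁_le hN2 hzA hzB h
    (fun i => (abs_intCast_le_sup_max_natAbs a b i).1)
    (fun i => (abs_intCast_le_sup_max_natAbs a b i).2) k₀
  rw [Fintype.card_fin] at herr
  calc _ ≤ (p_q : ℝ) ^ (q * N ^ (2 * k₀ + 1))
          * (q * (4 * _ * ((p₁ : ℝ) ^ (N ^ (2 * (k₀ + 1))))⁻¹)) :=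
        mul_le_mul ((prod_pow_le_pow_card_mul p hle_pq _).trans_eq (by simp)) herr
          (abs_nonneg _) (by positivity)
    _ = _ := by ring
end

section
/- For any integers n_1,...,n_q \geq 0 not all zero, set s to be an index maximizing p_s^{n_s}, and let k_0 = \lfloor \log(n_s)/(2 \log N) \rfloor. If N^{2k_0} \leq n_s \leq N^{2k_0+1}, then the fractional part of p_1^{n_1} \cdots p_q^{n_q} z_s is at most 2 p_s^{N^{2k_0+1}(q-N)}. -/
/-!
Split `z_s = ∑_k p_s^{-N^{2k}}` at `k = k₀`. Since `N^{2k} ≤ N^{2k₀} ≤ n_s` for `k ≤ k₀`,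
the product `P = ∏ p_i^{n_i}` times the head of the series is an integer, so the fractional
part of `P z_s` is at most `P` times the tail. The tail is dominated by twice its first term
`p_s^{-N^{2k₀+2}}`, while the maximality of `p_s^{n_s}` and `n_s ≤ N^{2k₀+1}` give
`P ≤ p_s^{q N^{2k₀+1}}`.
-/

open Finset

lemma Int.fract_le_self_of_nonneg {R : Type*} [Ring R] [LinearOrder R] [IsStrictOrderedRing R]
    [FloorRing R] {a : R} (ha : 0 ≤ a) : Int.fract a ≤ a := by
  have : (0 : R) ≤ ⌊a⌋ := by exact_mod_cast Int.floor_nonneg.mpr ha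
  rw [← Int.self_sub_floor]
  exact sub_le_self a this

lemma summable_pow_comp_of_strictMono {x : ℝ} (hx₀ : 0 ≤ x) (hx₁ : x < 1) {e : ℕ → ℕ}
    (he : StrictMono e) : Summable fun k => x ^ e k :=
  (summable_geometric_of_lt_one hx₀ hx₁).of_nonneg_of_le (fun _ => by positivity)
    fun k => pow_le_pow_of_le_one hx₀ hx₁.le (he.id_le k)

/-- Since `e m + k ≤ e (k + m)`, the tail is dominated by a geometric series. -/
lemma tsum_pow_comp_add_le {x : ℝ} (hx₀ : 0 ≤ x) (hx₁ : x < 1) {e : ℕ → ℕ}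
    (he : StrictMono e) (m : ℕ) : ∑' k, x ^ e (k + m) ≤ x ^ e m / (1 - x) := by
  have hle : ∀ k, x ^ e (k + m) ≤ x ^ e m * x ^ k := fun k => by
    rw [← pow_add, add_comm (e m)]
    exact pow_le_pow_of_le_one hx₀ hx₁.le (he.add_le_nat k m)
  calc ∑' k, x ^ e (k + m)
      ≤ ∑' k, x ^ e m * x ^ k :=
        Summable.tsum_le_tsum hle
          ((summable_nat_add_iff m).2 (summable_pow_comp_of_strictMono hx₀ hx₁ he))
          ((summable_geometric_of_lt_one hx₀ hx₁).mul_left _)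
    _ = x ^ e m / (1 - x) := by
        rw [tsum_mul_left, tsum_geometric_of_lt_one hx₀ hx₁, div_eq_mul_inv]

lemma exists_natCast_eq_pow_mul_sum_inv_pow {a : ℕ} (ha : a ≠ 0) (c n : ℕ) {ι : Type*}
    (S : Finset ι) {e : ι → ℕ} (he : ∀ k ∈ S, e k ≤ n) :
    ∃ M : ℕ, c * (a : ℝ) ^ n * ∑ k ∈ S, (a : ℝ)⁻¹ ^ e k = M := by
  refine ⟨∑ k ∈ S, c * a ^ (n - e k), ?_⟩
  push_cast
  rw [mul_sum]
  refine sum_congr rfl fun k hk => ?_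
  rw [pow_sub₀ _ (by exact_mod_cast ha) (he k hk), inv_pow, mul_assoc]

lemma fract_mul_tsum_inv_pow_le {a : ℕ} (ha : 2 ≤ a) (c n : ℕ) {e : ℕ → ℕ} (he : StrictMono e)
    {m : ℕ} (hm : ∀ k < m, e k ≤ n) :
    Int.fract (c * (a : ℝ) ^ n * ∑' k, (a : ℝ)⁻¹ ^ e k) ≤
      2 * (c * (a : ℝ) ^ n) * (a : ℝ)⁻¹ ^ e m := by
  set x : ℝ := (a : ℝ)⁻¹
  have hx₀ : 0 ≤ x := by positivity
  have hx₁ : x ≤ 1 / 2 := by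
    rw [one_div]
    exact inv_anti₀ two_pos (by exact_mod_cast ha)
  obtain ⟨M, hM⟩ := exists_natCast_eq_pow_mul_sum_inv_pow (by omega : a ≠ 0) c n
    (range m) fun k hk => hm k (mem_range.1 hk)
  have htail : ∑' k, x ^ e (k + m) ≤ 2 * x ^ e m :=
    calc _ ≤ x ^ e m / (1 - x) := tsum_pow_comp_add_le hx₀ (by linarith) he m
      _ ≤ 2 * x ^ e m := by
        rw [div_le_iff₀ (by linarith)]
        nlinarith [pow_nonneg hx₀ (e m)]
  calc Int.fract (c * (a : ℝ) ^ n * ∑' k, x ^ e k)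
      = Int.fract (M + c * (a : ℝ) ^ n * ∑' k, x ^ e (k + m)) := by
        rw [← (summable_pow_comp_of_strictMono hx₀ (by linarith) he).sum_add_tsum_nat_add m,
          mul_add, hM]
    _ ≤ c * (a : ℝ) ^ n * ∑' k, x ^ e (k + m) := by
        rw [Int.fract_natCast_add]
        exact Int.fract_le_self_of_nonneg (by positivity)
    _ ≤ c * (a : ℝ) ^ n * (2 * x ^ e m) := by gcongr
    _ = 2 * (c * (a : ℝ) ^ n) * x ^ e m := by ring

lemma prod_natCast_pow_le_pow_mul_card {ι : Type*} [Fintype ι] (p n : ι → ℕ) (s : ι)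
    (hs : ∀ r, p r ^ n r ≤ p s ^ n s) :
    ∏ i, (p i : ℝ) ^ n i ≤ (p s : ℝ) ^ (n s * Fintype.card ι) := by
  rw [pow_mul]
  exact_mod_cast prod_le_pow_card univ (fun i => p i ^ n i) _ fun i _ => hs i

lemma strictMono_pow_two_mul_succ {N : ℕ} (hN : 2 ≤ N) :
    StrictMono fun k : ℕ => N ^ (2 * (k + 1)) :=
  strictMono_nat_of_lt_succ fun k => Nat.pow_lt_pow_right hN (by omega)

lemma rpow_pow_mul_natCast_sub {a : ℝ} (ha : 0 < a) (q N j : ℕ) :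
    a ^ ((N : ℝ) ^ j * ((q : ℝ) - N)) = a ^ (q * N ^ j) * a⁻¹ ^ N ^ (j + 1) := by
  have hexp : (N : ℝ) ^ j * ((q : ℝ) - N) =
      ((q * N ^ j : ℕ) : ℝ) - ((N ^ (j + 1) : ℕ) : ℝ) := by
    push_cast
    ring
  rw [hexp, Real.rpow_sub ha, Real.rpow_natCast, Real.rpow_natCast, inv_pow, div_eq_mul_inv]

theorem stmt19_general (q : ℕ) (hq : 1 ≤ q) (p : Fin q → ℕ) (hp1 : ∀ i, 1 < p i)
    (N : ℕ) (hN : q < N)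
    (zA : Fin q → ℝ)
    (hzA : ∀ i, zA i = ∑' k : ℕ, ((p i : ℝ) ^ (N ^ (2 * (k + 1))))⁻¹)
    (n : Fin q → ℕ)
    (s : Fin q) (hs : ∀ r, p r ^ n r ≤ p s ^ n s)
    (k₀ : ℕ)
    (hsand : N ^ (2 * k₀) ≤ n s ∧ n s ≤ N ^ (2 * k₀ + 1)) :
    Int.fract ((∏ i, (p i : ℝ) ^ (n i)) * zA s) ≤
      2 * (p s : ℝ) ^ ((N : ℝ) ^ (2 * k₀ + 1) * ((q : ℝ) - (N : ℝ))) := by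
  have hP : ∏ i, (p i : ℝ) ^ n i =
      (∏ i ∈ univ.erase s, p i ^ n i : ℕ) * (p s : ℝ) ^ n s := by
    rw [← prod_erase_mul _ _ (mem_univ s)]
    push_cast
    rfl
  have hfract := fract_mul_tsum_inv_pow_le (hp1 s) (∏ i ∈ univ.erase s, p i ^ n i) (n s)
    (strictMono_pow_two_mul_succ (by omega)) (m := k₀)
    fun k hk => (Nat.pow_le_pow_right (by omega) (by omega)).trans hsand.1
  have hPle : ∏ i, (p i : ℝ) ^ n i ≤ (p s : ℝ) ^ (q * N ^ (2 * k₀ + 1)) := by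
    refine (prod_natCast_pow_le_pow_mul_card p n s hs).trans (pow_le_pow_right₀ ?_ ?_)
    · exact_mod_cast (hp1 s).le
    · rw [Fintype.card_fin, mul_comm]
      exact Nat.mul_le_mul_left q hsand.2
  rw [← hP] at hfract
  simp_rw [hzA s, ← inv_pow]
  rw [rpow_pow_mul_natCast_sub (Nat.cast_pos.mpr (zero_lt_one.trans (hp1 s))),
    show 2 * k₀ + 1 + 1 = 2 * (k₀ + 1) by ring, ← mul_assoc]
  refine hfract.trans ?_
  gcongr

/-- For `n₁,...,n_q ≥ 0` not all zero, with `s` an index maximizing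
`p_s^{n_s}` and `k₀ = ⌊log n_s / (2 log N)⌋`, if `N^{2k₀} ≤ n_s ≤ N^{2k₀+1}` then the
fractional part of `p_1^{n_1} ⋯ p_q^{n_q} z_s` is at most `2 p_s^{N^{2k₀+1}(q-N)}`. -/
theorem stmt19 (q : ℕ) (hq : 1 ≤ q) (p : Fin q → ℕ) (hp1 : ∀ i, 1 < p i)
    (hmono : StrictMono p) (N : ℕ) (hN : q < N)
    (zA : Fin q → ℝ)
    (hzA : ∀ i, zA i = ∑' k : ℕ, ((p i : ℝ) ^ (N ^ (2 * (k + 1))))⁻¹)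
    (n : Fin q → ℕ) (hn : n ≠ 0)
    (s : Fin q) (hs : ∀ r, p r ^ n r ≤ p s ^ n s)
    (k₀ : ℕ) (hk₀ : k₀ = ⌊Real.log (n s) / (2 * Real.log N)⌋₊)
    (hsand : N ^ (2 * k₀) ≤ n s ∧ n s ≤ N ^ (2 * k₀ + 1)) :
    Int.fract ((∏ i, (p i : ℝ) ^ (n i)) * zA s) ≤
      2 * (p s : ℝ) ^ ((N : ℝ) ^ (2 * k₀ + 1) * ((q : ℝ) - (N : ℝ))) :=
  stmt19_general q hq p hp1 N hN zA hzA n s hs k₀ hsand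
end
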